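/- arXiv:1702.06906 — 2 statements merged into one kernel-verified Lean document; each statement's English description precedes it below -/
import Mathlib

section
/- Let N be a T-net of order m (with m ≥ 1). Then the number of Eulerian cycles of N satisfies |N| ≤ 2^(m-1). -/
/-- An Eulerian cycle (up to rotation) of the directed multigraph encoded by
`src, tgt : E → V`: a permutation `σ` of the edges such that the edge `σ e`
starts where `e` ends, and `σ` is a single cycle whose support is all of `E`. -/
def IsEulerianCycle {E V : Type*} [Fintype E] [DecidableEq E]
    (src tgt : E → V) (σ : Equiv.Perm E) : Prop :=
  (∀ e, src (σ e) = tgt e) ∧ σ.IsCycle ∧ σ.support = Finset.univ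

/-- The number of Eulerian cycles of the graph encoded by `src, tgt : E → V`. -/
noncomputable def eulerCount {E V : Type*} [Fintype E] [DecidableEq E] (src tgt : E → V) : ℕ :=
  Nat.card {σ : Equiv.Perm E // IsEulerianCycle src tgt σ}

/-- A T-net of order `m ≥ 1` has at most `2^(m-1)` Eulerian cycles. -/
theorem tnet_euler_count_le {V E : Type*} [Fintype V] [Fintype E]
    [DecidableEq V] [DecidableEq E]
    (src tgt : E → V) (m : ℕ) (hm : 1 ≤ m)
    (hV : Fintype.card V = m) (hE : Fintype.card E = 2 * m)
    (hout : ∀ v : V, Nat.card {e : E // src e = v} = 2)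
    (hin : ∀ v : V, Nat.card {e : E // tgt e = v} = 2) :
    eulerCount src tgt ≤ 2 ^ (m - 1) := by
  classical
  set P : Equiv.Perm E → Prop := fun σ => ∀ e, src (σ e) = tgt e with hP
  -- in/out-edge pairs at each vertex
  have hTcard : ∀ v, (Finset.univ.filter (fun e => tgt e = v)).card = 2 := by
    intro v
    have := hin v
    rwa [Nat.card_eq_fintype_card, Fintype.card_subtype] at this
  have hScard : ∀ v, (Finset.univ.filter (fun e => src e = v)).card = 2 := by
    intro v
    have := hout v
    rwa [Nat.card_eq_fintype_card, Fintype.card_subtype] at this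
  choose A B hAB hTeq using fun v => Finset.card_eq_two.mp (hTcard v)
  choose C D hCD hSeq using fun v => Finset.card_eq_two.mp (hScard v)
  have htgtA : ∀ v, tgt (A v) = v := by
    intro v
    have : A v ∈ Finset.univ.filter (fun e => tgt e = v) := by rw [hTeq]; simp
    simpa using this
  have htgtB : ∀ v, tgt (B v) = v := by
    intro v
    have : B v ∈ Finset.univ.filter (fun e => tgt e = v) := by rw [hTeq]; simp
    simpa using this
  have hmemT : ∀ e, e = A (tgt e) ∨ e = B (tgt e) := by
    intro e
    have : e ∈ Finset.univ.filter (fun e' => tgt e' = tgt e) := by simp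
    rw [hTeq] at this
    simpa using this
  have hmemS : ∀ (σ : Equiv.Perm E), P σ → ∀ e, σ e = C (tgt e) ∨ σ e = D (tgt e) := by
    intro σ hσ e
    have : σ e ∈ Finset.univ.filter (fun e' => src e' = tgt e) := by simp [hσ e]
    rw [hSeq] at this
    simpa using this
  -- a constrained permutation is determined by one bit per vertex
  have key : ∀ (σ τ : Equiv.Perm E), P σ → P τ →
      (∀ v, (σ (A v) = C v) ↔ (τ (A v) = C v)) → σ = τ := by
    intro σ τ hσ hτ h
    ext e
    set v := tgt e with hv
    have hσA : σ (A v) = C v ∨ σ (A v) = D v := by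
      have := hmemS σ hσ (A v); rwa [htgtA] at this
    have hσB : σ (B v) = C v ∨ σ (B v) = D v := by
      have := hmemS σ hσ (B v); rwa [htgtB] at this
    have hτA : τ (A v) = C v ∨ τ (A v) = D v := by
      have := hmemS τ hτ (A v); rwa [htgtA] at this
    have hτB : τ (B v) = C v ∨ τ (B v) = D v := by
      have := hmemS τ hτ (B v); rwa [htgtB] at this
    have hneσ : σ (A v) ≠ σ (B v) := fun h' => hAB v (σ.injective h')
    have hneτ : τ (A v) ≠ τ (B v) := fun h' => hAB v (τ.injective h')
    have hmain : σ (A v) = τ (A v) ∧ σ (B v) = τ (B v) := by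
      by_cases hc : σ (A v) = C v
      · have h1 : τ (A v) = C v := (h v).mp hc
        have h2 : σ (B v) = D v := by
          rcases hσB with h'|h'
          · exact absurd (hc.trans h'.symm) hneσ
          · exact h'
        have h3 : τ (B v) = D v := by
          rcases hτB with h'|h'
          · exact absurd (h1.trans h'.symm) hneτ
          · exact h'
        exact ⟨hc.trans h1.symm, h2.trans h3.symm⟩
      · have h0 : σ (A v) = D v := hσA.resolve_left hc
        have h1 : τ (A v) ≠ C v := fun h' => hc ((h v).mpr h')
        have h1' : τ (A v) = D v := hτA.resolve_left h1
        have h2 : σ (B v) = C v := by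
          rcases hσB with h'|h'
          · exact h'
          · exact absurd (h0.trans h'.symm) hneσ
        have h3 : τ (B v) = C v := by
          rcases hτB with h'|h'
          · exact h'
          · exact absurd (h1'.trans h'.symm) hneτ
        exact ⟨h0.trans h1'.symm, h2.trans h3.symm⟩
    rcases hmemT e with he|he
    · rw [← hv] at he; rw [he]; exact hmain.1
    · rw [← hv] at he; rw [he]; exact hmain.2
  -- count of constrained permutations
  have hScount : Nat.card {σ : Equiv.Perm E // P σ} ≤ 2 ^ m := by
    have hinj : Function.Injective
        (fun σ : {σ : Equiv.Perm E // P σ} => (fun v => decide (σ.1 (A v) = C v) : V → Bool)) := by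
      intro σ τ h
      apply Subtype.ext
      apply key _ _ σ.2 τ.2
      intro v
      have := congrFun h v
      simpa [decide_eq_decide] using this
    calc Nat.card {σ : Equiv.Perm E // P σ}
        ≤ Nat.card (V → Bool) := Nat.card_le_card_of_injective _ hinj
      _ = 2 ^ m := by
          rw [Nat.card_eq_fintype_card, Fintype.card_fun, Fintype.card_bool, hV]
  -- a fixed vertex and its two in-edges
  have hVpos : 0 < Fintype.card V := by rw [hV]; omega
  obtain ⟨v₀⟩ := Fintype.card_pos_iff.mp hVpos
  set a0 := A v₀
  set b0 := B v₀
  have hab : a0 ≠ b0 := hAB v₀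
  have hta : tgt a0 = v₀ := htgtA v₀
  have htb : tgt b0 = v₀ := htgtB v₀
  have htsw : ∀ e, tgt (Equiv.swap a0 b0 e) = tgt e := by
    intro e
    by_cases h1 : e = a0
    · rw [h1, Equiv.swap_apply_left, hta, htb]
    by_cases h2 : e = b0
    · rw [h2, Equiv.swap_apply_right, hta, htb]
    · rw [Equiv.swap_apply_of_ne_of_ne h1 h2]
  -- sign of Eulerian cycles is -1
  have hsign : ∀ σ : Equiv.Perm E, IsEulerianCycle src tgt σ → Equiv.Perm.sign σ = -1 := by
    rintro σ ⟨-, hc, hs⟩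
    rw [hc.sign, hs, Finset.card_univ, hE, pow_mul]
    norm_num
  -- the doubling injection into constrained permutations
  set J : {σ : Equiv.Perm E // IsEulerianCycle src tgt σ} × Bool → {σ : Equiv.Perm E // P σ} :=
    fun p => ⟨if p.2 then p.1.1 else p.1.1 * Equiv.swap a0 b0, by
      intro e
      by_cases hb : p.2
      · simp only [hb, if_true]
        exact p.1.2.1 e
      · rw [if_neg hb, Equiv.Perm.mul_apply, p.1.2.1, htsw]⟩ with hJ
  have hJinj : Function.Injective J := by
    rintro ⟨⟨σ, hσ⟩, bσ⟩ ⟨⟨τ, hτ⟩, bτ⟩ h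
    have h' : (if bσ then σ else σ * Equiv.swap a0 b0)
        = (if bτ then τ else τ * Equiv.swap a0 b0) := congrArg Subtype.val h
    have hswsign : Equiv.Perm.sign (Equiv.swap a0 b0) = -1 := Equiv.Perm.sign_swap hab
    match bσ, bτ with
    | true, true =>
        simp only [if_true] at h'
        simp [h']
    | false, false =>
        simp only [Bool.false_eq_true, if_false] at h'
        have := mul_right_cancel h'
        simp [this]
    | true, false =>
        simp only [Bool.false_eq_true, if_true, if_false] at h'
        have h1 : Equiv.Perm.sign σ = Equiv.Perm.sign (τ * Equiv.swap a0 b0) := by rw [h']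
        rw [hsign σ hσ, Equiv.Perm.sign_mul, hsign τ hτ, hswsign] at h1
        norm_num at h1
    | false, true =>
        simp only [Bool.false_eq_true, if_true, if_false] at h'
        have h1 : Equiv.Perm.sign (σ * Equiv.swap a0 b0) = Equiv.Perm.sign τ := by rw [h']
        rw [hsign τ hτ, Equiv.Perm.sign_mul, hsign σ hσ, hswsign] at h1
        norm_num at h1
  have hdouble : Nat.card ({σ : Equiv.Perm E // IsEulerianCycle src tgt σ} × Bool)
      ≤ Nat.card {σ : Equiv.Perm E // P σ} := Nat.card_le_card_of_injective J hJinj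
  have hprod : Nat.card ({σ : Equiv.Perm E // IsEulerianCycle src tgt σ} × Bool)
      = eulerCount src tgt * 2 := by
    rw [Nat.card_prod, eulerCount]
    simp
  have hfin : eulerCount src tgt * 2 ≤ 2 ^ m := by
    rw [← hprod]
    exact hdouble.trans hScount
  have hpow : 2 ^ m = 2 ^ (m - 1) * 2 := by
    rw [← pow_succ]
    congr 1
    omega
  rw [hpow] at hfin
  exact Nat.le_of_mul_le_mul_right hfin (by norm_num)
end

section
/- (Splitting lemma) Let N be a directed multigraph encoded by src, tgt : E → V with finite E and V, and let v ∈ V be a vertex with exactly two incoming edges a ≠ b (tgt⁻¹(v) = {a,b}) and exactly two outgoing edges c ≠ d (src⁻¹(v) = {c,d}). Let N₁ be the graph obtained from N by replacing v with two new vertices v₁, v₂ and setting tgt(a) = v₁, src(c) = v₁, tgt(b) = v₂, src(d) = v₂ (all other incidences unchanged), and let N₂ be obtained in the same way but with tgt(a) = v₁, src(d) = v₁, tgt(b) = v₂, src(c) = v₂. Then the number of Eulerian cycles satisfies |N| = |N₁| + |N₂|. -/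
/-- Auxiliary: an Eulerian cycle of the split graph (with `c` at `v₁`) is the
same thing as an Eulerian cycle of the original graph with `σ a = c`. -/
lemma split_aux {V E : Type*} [Fintype V] [Fintype E]
    [DecidableEq V] [DecidableEq E]
    (src tgt : E → V) (v : V) (a b c : E)
    (hab : a ≠ b)
    (hta : tgt a = v) (htb : tgt b = v) (hin : ∀ e, tgt e = v → e = a ∨ e = b)
    (hsc : src c = v)
    (σ : Equiv.Perm E) :
    IsEulerianCycle
      (fun e => if h : src e = v then
          (if e = c then Sum.inr false else Sum.inr true)
        else Sum.inl (⟨src e, h⟩ : {u : V // u ≠ v}))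
      (fun e => if h : tgt e = v then
          (if e = a then Sum.inr false else Sum.inr true)
        else Sum.inl (⟨tgt e, h⟩ : {u : V // u ≠ v})) σ
      ↔ IsEulerianCycle src tgt σ ∧ σ a = c := by
  constructor
  · rintro ⟨h1, h2, h3⟩
    have hac : σ a = c := by
      have h := h1 a
      dsimp only at h
      rw [dif_pos hta, if_pos rfl] at h
      by_cases hv : src (σ a) = v
      · rw [dif_pos hv] at h
        by_cases hc : σ a = c
        · exact hc
        · rw [if_neg hc] at h; simp at h
      · rw [dif_neg hv] at h; simp at h
    refine ⟨⟨fun e => ?_, h2, h3⟩, hac⟩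
    have he := h1 e
    dsimp only at he
    by_cases hv : tgt e = v
    · rcases hin e hv with rfl | rfl
      · rw [hac, hsc, hv]
      · -- e = b
        by_cases hsv : src (σ e) = v
        · rw [hsv, hv]
        · rw [dif_neg hsv, dif_pos hv, if_neg (fun h => hab h.symm)] at he
          simp at he
    · rw [dif_neg hv] at he
      by_cases hsv : src (σ e) = v
      · rw [dif_pos hsv] at he
        by_cases hc : σ e = c <;> simp [hc] at he
      · rw [dif_neg hsv] at he
        simpa using he
  · rintro ⟨⟨h1, h2, h3⟩, hac⟩
    refine ⟨fun e => ?_, h2, h3⟩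
    dsimp only
    by_cases hv : tgt e = v
    · rcases hin e hv with rfl | rfl
      · rw [hac]
        simp [hsc, hta]
      · have hsb : src (σ e) = v := by rw [h1 e, htb]
        have hbc : σ e ≠ c := fun h => hab (σ.injective (hac.trans h.symm))
        rw [dif_pos hsb, if_neg hbc, dif_pos htb, if_neg (fun h => hab h.symm)]
    · have hs : src (σ e) = tgt e := h1 e
      rw [dif_neg hv]
      rw [hs, dif_neg hv]

/-- Splitting lemma: if `v` has exactly two incoming edges `a ≠ b` and exactly
two outgoing edges `c ≠ d`, and we split `v` into two vertices `v₁ = inr false`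
and `v₂ = inr true` in the two possible ways (`N₁`: `a,c` at `v₁` and `b,d` at
`v₂`; `N₂`: `a,d` at `v₁` and `b,c` at `v₂`), then `|N| = |N₁| + |N₂|`. -/
theorem splitting_lemma {V E : Type*} [Fintype V] [Fintype E]
    [DecidableEq V] [DecidableEq E]
    (src tgt : E → V) (v : V) (a b c d : E)
    (hab : a ≠ b) (hcd : c ≠ d)
    (hta : tgt a = v) (htb : tgt b = v) (hin : ∀ e, tgt e = v → e = a ∨ e = b)
    (hsc : src c = v) (hsd : src d = v) (hout : ∀ e, src e = v → e = c ∨ e = d) :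
    eulerCount src tgt =
      eulerCount
        (fun e => if h : src e = v then
            (if e = c then Sum.inr false else Sum.inr true)
          else Sum.inl (⟨src e, h⟩ : {u : V // u ≠ v}))
        (fun e => if h : tgt e = v then
            (if e = a then Sum.inr false else Sum.inr true)
          else Sum.inl (⟨tgt e, h⟩ : {u : V // u ≠ v})) +
      eulerCount
        (fun e => if h : src e = v then
            (if e = d then Sum.inr false else Sum.inr true)
          else Sum.inl (⟨src e, h⟩ : {u : V // u ≠ v}))
        (fun e => if h : tgt e = v then
            (if e = a then Sum.inr false else Sum.inr true)
          else Sum.inl (⟨tgt e, h⟩ : {u : V // u ≠ v})) := by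
  classical
  have key1 := split_aux src tgt v a b c hab hta htb hin hsc
  have key2 := split_aux src tgt v a b d hab hta htb hin hsd
  unfold eulerCount
  rw [← Nat.card_sum]
  apply Nat.card_congr
  refine Equiv.trans (Equiv.subtypeEquivRight (q := fun σ =>
      (IsEulerianCycle src tgt σ ∧ σ a = c) ∨ (IsEulerianCycle src tgt σ ∧ σ a = d))
      (fun σ => ?_)) ?_
  · constructor
    · intro h
      rcases hout (σ a) (by rw [h.1 a, hta]) with hc | hd
      · exact Or.inl ⟨h, hc⟩
      · exact Or.inr ⟨h, hd⟩
    · rintro (⟨h, _⟩ | ⟨h, _⟩) <;> exact h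
  · refine Equiv.trans (subtypeOrEquiv _ _ ?_) (Equiv.sumCongr
      (Equiv.subtypeEquivRight (fun σ => (key1 σ).symm))
      (Equiv.subtypeEquivRight (fun σ => (key2 σ).symm)))
    intro p hp hq σ hσ
    exact hcd (((hp σ hσ).2.symm).trans (hq σ hσ).2)
end
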